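/- For every natural number n, 9·H_{n+2} - 2·H_{n+1} + 35·H_n = 41·K_n, where K_n is the n-th Tribonacci-Lucas number. -/
import Mathlib


/-- The Tribonacci-Lucas sequence. -/
def tribLucas : ℕ → ℤ
  | 0 => 3
  | 1 => 1
  | 2 => 3
  | n + 3 => tribLucas (n + 2) + tribLucas (n + 1) + tribLucas n

/-- The generalized Tribonacci sequence. -/
def genTrib : ℕ → ℤ
  | 0 => 3
  | 1 => 0
  | 2 => 2
  | n + 3 => genTrib (n + 2) + genTrib (n + 1) + genTrib n

theorem genTrib_tribLucas_relation (n : ℕ) :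
    9 * genTrib (n + 2) - 2 * genTrib (n + 1) + 35 * genTrib n = 41 * tribLucas n := by
  induction n using Nat.strong_induction_on with
  | _ n ih =>
    match n with
    | 0 => decide
    | 1 => decide
    | 2 => decide
    | (m+3) =>
      have h0 := ih m (by omega)
      have h1 := ih (m+1) (by omega)
      have h2 := ih (m+2) (by omega)
      simp only [show m+3+2 = m+2+3 from rfl, show m+3+1 = m+1+3 from rfl,
        genTrib, tribLucas] at *
      ring_nf at *
      omega
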